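/- JOCC equation: Let A, M ∈ ℂ^{n×n} be Hermitian, M positive definite, with eigenpair (λ₁, x₁) of the pencil (A, M). Let x ∈ ℂⁿ be nonzero, neither collinear with x₁ nor M-orthogonal to x₁, with Rayleigh quotient θ = λ(x) and residual r = Ax − θMx. Let Q = I − ‖x‖_M^{-2} x x* M be the projector onto the M-orthogonal complement of span{x}. Then there exists a scalar τ ≠ 0 such that x̃ = −x + τx₁ satisfies Q x̃ = x̃ and Q*(A − λ₁M)Q x̃ = −r. -/

import Mathlib

/-!
With τ = ‖x‖²_M / (x* M x₁) the vector x̃ = −x + τx₁ is M-orthogonal to x, so Q fixes it.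
As (A − λ₁M)x₁ = 0, (A − λ₁M)x̃ = −(Ax − λ₁Mx), and Q* = I − ‖x‖_M⁻² M x x* subtracts the
multiple (λ₁ − θ)Mx of Mx from it, which leaves −(Ax − θMx) = −r.
-/

open Matrix ComplexOrder

namespace Matrix

variable {ι R : Type*} [Fintype ι] [CommRing R]

section

variable [DecidableEq ι]

lemma one_sub_smul_vecMulVec_mul_mulVec (c : R) (x y v : ι → R) (M : Matrix ι ι R) :
    (1 - c • (vecMulVec x y * M)) *ᵥ v = v - (c * (y ⬝ᵥ M *ᵥ v)) • x := by
  rw [sub_mulVec, one_mulVec, smul_mulVec, ← mulVec_mulVec, vecMulVec_mulVec, op_smul_eq_smul,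
    smul_smul]

lemma one_sub_smul_mul_vecMulVec_mulVec (c : R) (x y w : ι → R) (M : Matrix ι ι R) :
    (1 - c • (M * vecMulVec x y)) *ᵥ w = w - (c * (y ⬝ᵥ w)) • (M *ᵥ x) := by
  rw [sub_mulVec, one_mulVec, smul_mulVec, ← mulVec_mulVec, vecMulVec_mulVec, op_smul_eq_smul,
    mulVec_smul, smul_smul]

end

variable [StarRing R]

lemma IsHermitian.star_dotProduct_mulVec {N : Matrix ι ι R} (hN : N.IsHermitian) (a b : ι → R) :
    star (star a ⬝ᵥ N *ᵥ b) = star b ⬝ᵥ N *ᵥ a := by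
  rw [← star_dotProduct, star_mulVec, hN.eq, ← dotProduct_mulVec]

lemma conjTranspose_one_sub_smul_vecMulVec_mul [DecidableEq ι] {M : Matrix ι ι R}
    (hM : M.IsHermitian) (c : R) (x : ι → R) :
    (1 - c • (vecMulVec x (star x) * M))ᴴ = 1 - star c • (M * vecMulVec x (star x)) := by
  rw [conjTranspose_sub, conjTranspose_one, conjTranspose_smul, conjTranspose_mul,
    conjTranspose_vecMulVec, star_star, hM.eq]

end Matrix

theorem stmt14_general {n : ℕ} (A M : Matrix (Fin n) (Fin n) ℂ)
    (hM : M.PosDef)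
    (lam1 : ℝ) (x1 x : Fin n → ℂ)
    (heig : A.mulVec x1 = (lam1 : ℂ) • M.mulVec x1)
    (hx : x ≠ 0)
    (hMorth : star x1 ⬝ᵥ M.mulVec x ≠ 0) :
    ∃ τ : ℂ, τ ≠ 0 ∧
      (1 - (star x ⬝ᵥ M.mulVec x)⁻¹ • (vecMulVec x (star x) * M)).mulVec (-x + τ • x1)
        = -x + τ • x1 ∧
      ((1 - (star x ⬝ᵥ M.mulVec x)⁻¹ • (vecMulVec x (star x) * M))ᴴ *
          (A - (lam1 : ℂ) • M) *
          (1 - (star x ⬝ᵥ M.mulVec x)⁻¹ • (vecMulVec x (star x) * M))).mulVec (-x + τ • x1)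
        = -(A.mulVec x -
            ((star x ⬝ᵥ A.mulVec x) / (star x ⬝ᵥ M.mulVec x)) • M.mulVec x) := by
  set s := star x ⬝ᵥ M *ᵥ x
  set t := star x ⬝ᵥ M *ᵥ x1
  have hs : s ≠ 0 := (hM.dotProduct_mulVec_pos hx).ne'
  have hs_star : star s = s := hM.1.star_dotProduct_mulVec x x
  have ht : t ≠ 0 := by
    rw [show t = _ from (hM.1.star_dotProduct_mulVec x1 x).symm]
    exact star_ne_zero.mpr hMorth
  set x' := -x + (s / t) • x1
  have hx'_orth : star x ⬝ᵥ M *ᵥ x' = 0 := by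
    rw [mulVec_add, mulVec_neg, mulVec_smul, dotProduct_add, dotProduct_neg, dotProduct_smul,
      smul_eq_mul, div_mul_cancel₀ s ht, neg_add_cancel]
  have hQx' : (1 - s⁻¹ • (vecMulVec x (star x) * M)) *ᵥ x' = x' := by
    rw [one_sub_smul_vecMulVec_mul_mulVec, hx'_orth, mul_zero, zero_smul, sub_zero]
  have hBx' : (A - (lam1 : ℂ) • M) *ᵥ x' = -(A *ᵥ x - (lam1 : ℂ) • M *ᵥ x) := by
    simp only [x', sub_mulVec, smul_mulVec, mulVec_add, mulVec_neg, mulVec_smul, heig]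
    module
  refine ⟨s / t, div_ne_zero hs ht, hQx', ?_⟩
  rw [← mulVec_mulVec, ← mulVec_mulVec, hQx', hBx',
    conjTranspose_one_sub_smul_vecMulVec_mul hM.1, star_inv₀, hs_star,
    one_sub_smul_mul_vecMulVec_mulVec, dotProduct_neg, dotProduct_sub, dotProduct_smul,
    smul_eq_mul]
  have hcoeff : s⁻¹ * -(star x ⬝ᵥ A *ᵥ x - lam1 * s) = (lam1 : ℂ) - (star x ⬝ᵥ A *ᵥ x) / s := by
    field_simp
    ring
  rw [hcoeff]
  module

/-- JOCC equation: there is τ ≠ 0 so that x̃ = −x + τx₁ satisfies Qx̃ = x̃ and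
Q*(A − λ₁M)Q x̃ = −r, where Q = I − ‖x‖_M⁻² x x* M and r = Ax − θMx with θ the
Rayleigh quotient of x. -/
theorem stmt14 {n : ℕ} (A M : Matrix (Fin n) (Fin n) ℂ)
    (hA : A.IsHermitian) (hM : M.PosDef)
    (lam1 : ℝ) (x1 x : Fin n → ℂ) (hx1 : x1 ≠ 0)
    (heig : A.mulVec x1 = (lam1 : ℂ) • M.mulVec x1)
    (hx : x ≠ 0)
    (hcol : ∀ c : ℂ, x ≠ c • x1)
    (hMorth : star x1 ⬝ᵥ M.mulVec x ≠ 0) :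
    ∃ τ : ℂ, τ ≠ 0 ∧
      (1 - (star x ⬝ᵥ M.mulVec x)⁻¹ • (vecMulVec x (star x) * M)).mulVec (-x + τ • x1)
        = -x + τ • x1 ∧
      ((1 - (star x ⬝ᵥ M.mulVec x)⁻¹ • (vecMulVec x (star x) * M))ᴴ *
          (A - (lam1 : ℂ) • M) *
          (1 - (star x ⬝ᵥ M.mulVec x)⁻¹ • (vecMulVec x (star x) * M))).mulVec (-x + τ • x1)
        = -(A.mulVec x -
            ((star x ⬝ᵥ A.mulVec x) / (star x ⬝ᵥ M.mulVec x)) • M.mulVec x) :=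
  stmt14_general A M hM lam1 x1 x heig hx hMorth
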